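/- Let K and L be convex bodies in ℝⁿ, u a regular unit normal vector common to a regular support element (x,u) of K, and let t ⊥ u be a unit vector. If K ∩ (x + span{u,t}) ⊆ K' for a planar convex body K' in the plane x + span{u,t} having (x,u) as a support element, then the upper radius of curvature of the section at (x,u) in direction t is at most the upper radius of curvature of K' at (x,u) in direction t. In particular, ρ_s(K,x,t) ≤ ρ̄_s(K,u,t), i.e., the upper sectional radius of curvature is at most the upper tangential radius of curvature. -/

import Mathlib

/-!
For a point `p` of the lower half-plane and `b > 0`, `circRad p < b` says exactly that `p` lies in
the open disc of radius `b` centred at `(0, -b)`. If `M ⊆ K'` and `K'` lies in the lower half-plane,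
each frontier point `z` of `M` has a frontier point `w` of `K'` straight above it, at most as far
from the origin. Near the origin `z` lies above the centre of the disc, so `w` in the disc forces
`z` in the disc; hence every bound on the radii of `K'` near `0` bounds those of `M`. The section of
`K` by the plane `x + span {t, u}` is contained in the projection of `K` to that plane.
-/

open scoped RealInnerProductSpace
open Metric Filter

/-- The radius of the circle through the origin and `p` with centre on the ray
spanned by minus the second coordinate direction, as an extended real number;
`⊤` in the degenerate tangent case. -/
noncomputable def circRad (p : EuclideanSpace ℝ (Fin 2)) : EReal :=
  if p 1 = 0 then (⊤ : EReal)
  else (((p 0) ^ 2 + (p 1) ^ 2) / (2 * (-(p 1))) : ℝ)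

/-- Upper radius of curvature of a planar convex body `M` having the support element
`(0, e₁)` (outer normal the second coordinate direction), in the tangent direction
given by the first coordinate direction. -/
noncomputable def uppRad (M : Set (EuclideanSpace ℝ (Fin 2))) : EReal :=
  Filter.limsup circRad (nhdsWithin 0 {p | p ∈ frontier M ∧ 0 < p 0})

theorem IsPreconnected.inter_frontier_nonempty {X : Type*} [TopologicalSpace X] {s t : Set X}
    (hs : IsPreconnected s) (hst : (s ∩ t).Nonempty) (hst' : (s \ t).Nonempty) :
    (s ∩ frontier t).Nonempty := by
  have := Subtype.preconnectedSpace hs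
  obtain ⟨p, hps, hpt⟩ := hst
  obtain ⟨q, hqs, hqt⟩ := hst'
  have hne : ((↑) : s → X) ⁻¹' t ≠ Set.univ := fun h =>
    hqt (Set.ext_iff.1 h ⟨q, hqs⟩ |>.2 trivial)
  obtain ⟨p, hp⟩ := nonempty_frontier_iff.2 ⟨⟨⟨p, hps⟩, hpt⟩, hne⟩
  exact ⟨p, p.2, continuous_subtype_val.frontier_preimage_subset t hp⟩

namespace EuclideanSpace

lemma norm_le_norm_of_apply_zero_eq {p q : EuclideanSpace ℝ (Fin 2)} (h0 : p 0 = q 0)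
    (h1 : |p 1| ≤ |q 1|) : ‖p‖ ≤ ‖q‖ := by
  simp only [EuclideanSpace.norm_eq, Fin.sum_univ_two, Real.norm_eq_abs, h0]
  gcongr

end EuclideanSpace

lemma circRad_nonneg {p : EuclideanSpace ℝ (Fin 2)} (hp : p 1 ≤ 0) : 0 ≤ circRad p := by
  unfold circRad
  split_ifs with h
  · exact le_top
  · exact EReal.coe_nonneg.2 (div_nonneg (by positivity) (by linarith))

lemma circRad_lt_iff {p : EuclideanSpace ℝ (Fin 2)} (hp : p 1 ≤ 0) (b : ℝ) :
    circRad p < b ↔ p 1 < 0 ∧ p 0 ^ 2 + (p 1 + b) ^ 2 < b ^ 2 := by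
  unfold circRad
  split_ifs with h
  · simp [h]
  · have hp' : p 1 < 0 := lt_of_le_of_ne hp h
    rw [EReal.coe_lt_coe_iff, div_lt_iff₀ (by linarith)]
    constructor
    · intro h'; exact ⟨hp', by nlinarith⟩
    · intro h'; nlinarith [h'.2]

lemma circRad_lt_of_apply_one_le {z w : EuclideanSpace ℝ (Fin 2)} {b : ℝ} (h0 : z 0 = w 0)
    (hbz : -b < z 1) (hzw : z 1 ≤ w 1) (hw : w 1 ≤ 0) (hwb : circRad w < b) :
    circRad z < b := by
  obtain ⟨hw1, hwdisc⟩ := (circRad_lt_iff hw b).1 hwb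
  refine (circRad_lt_iff (hzw.trans hw) b).2 ⟨hzw.trans_lt hw1, ?_⟩
  rw [h0]
  nlinarith

lemma exists_mem_frontier_above {K : Set (EuclideanSpace ℝ (Fin 2))} (hK : IsClosed K)
    (hKsup : ∀ p ∈ K, p 1 ≤ 0) {z : EuclideanSpace ℝ (Fin 2)} (hz : z ∈ K) :
    ∃ w ∈ frontier K, w 0 = z 0 ∧ z 1 ≤ w 1 ∧ w 1 ≤ 0 := by
  set ray : ℝ → EuclideanSpace ℝ (Fin 2) := fun s => z + s • EuclideanSpace.single 1 1
  have hray0 : ∀ s, ray s 0 = z 0 := by simp [ray]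
  have hray1 : ∀ s, ray s 1 = z 1 + s := by simp [ray]
  have hin : ray 0 ∈ K := by simpa [ray] using hz
  have hout : ray (1 - z 1) ∉ K := fun h => by linarith [hray1 (1 - z 1), hKsup _ h]
  obtain ⟨w, ⟨s, hs, rfl⟩, hw⟩ :=
    (isPreconnected_Ici.image ray (by fun_prop)).inter_frontier_nonempty
      ⟨ray 0, ⟨0, Set.self_mem_Ici, rfl⟩, hin⟩
      ⟨ray (1 - z 1), ⟨_, by simpa using (hKsup z hz).trans zero_le_one, rfl⟩, hout⟩
  refine ⟨ray s, hw, hray0 s, ?_, hKsup _ (hK.frontier_subset hw)⟩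
  rw [hray1]
  exact le_add_of_nonneg_right hs

lemma uppRad_mono {M K : Set (EuclideanSpace ℝ (Fin 2))} (hK : IsClosed K)
    (hKsup : ∀ p ∈ K, p 1 ≤ 0) (hMK : M ⊆ K) : uppRad M ≤ uppRad K := by
  refine EReal.le_of_forall_lt_iff_le.1 fun b hb => ?_
  obtain ⟨δ, hδ, hKδ⟩ := nhdsWithin_basis_ball.eventually_iff.1 (eventually_lt_of_limsup_lt hb)
  have hbelow : ∀ z ∈ frontier M, 0 < z 0 → ‖z‖ < δ →
      ∃ w : EuclideanSpace ℝ (Fin 2), w 0 = z 0 ∧ z 1 ≤ w 1 ∧ w 1 ≤ 0 ∧ circRad w < b := by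
    intro z hzM hz0 hzδ
    have hzK : z ∈ K := closure_minimal hMK hK (frontier_subset_closure hzM)
    obtain ⟨w, hwK, hw0, hzw, hw1⟩ := exists_mem_frontier_above hK hKsup hzK
    have hwz : ‖w‖ ≤ ‖z‖ := EuclideanSpace.norm_le_norm_of_apply_zero_eq hw0
      (abs_le_abs_of_nonpos hw1 hzw)
    exact ⟨w, hw0, hzw, hw1, hKδ ⟨mem_ball_zero_iff.2 (hwz.trans_lt hzδ), hwK, hw0 ▸ hz0⟩⟩
  refine limsup_le_of_le (by isBoundedDefault) (nhdsWithin_basis_ball.eventually_iff.2 ?_)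
  rcases le_or_gt b 0 with hb0 | hb0
  · refine ⟨δ, hδ, fun z ⟨hzδ, hzM, hz0⟩ => ?_⟩
    obtain ⟨w, -, -, hw1, hwb⟩ := hbelow z hzM hz0 (mem_ball_zero_iff.1 hzδ)
    exact absurd ((circRad_nonneg hw1).trans_lt hwb) (by exact_mod_cast hb0.not_gt)
  · refine ⟨min δ b, lt_min hδ hb0, fun z ⟨hzδb, hzM, hz0⟩ => ?_⟩
    have hz : ‖z‖ < min δ b := mem_ball_zero_iff.1 hzδb
    obtain ⟨w, hw0, hzw, hw1, hwb⟩ := hbelow z hzM hz0 (hz.trans_le (min_le_left _ _))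
    have hbz : -b < z 1 := neg_lt_of_abs_lt <|
      (PiLp.norm_apply_le z 1).trans_lt (hz.trans_le (min_le_right _ _))
    exact (circRad_lt_of_apply_one_le hw0.symm hbz hzw hw1 hwb).le

section Plane

variable {E : Type*} [NormedAddCommGroup E] [InnerProductSpace ℝ E]

noncomputable def planeEmbedding (x t u : E) : EuclideanSpace ℝ (Fin 2) → E :=
  fun p => x + p 0 • t + p 1 • u

noncomputable def planeCoords (x t u : E) : E → EuclideanSpace ℝ (Fin 2) :=
  fun z => (EuclideanSpace.equiv (Fin 2) ℝ).symm ![⟪z - x, t⟫, ⟪z - x, u⟫]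

lemma continuous_planeCoords (x t u : E) : Continuous (planeCoords x t u) :=
  (EuclideanSpace.equiv (Fin 2) ℝ).symm.continuous.comp (by fun_prop)

lemma leftInverse_planeCoords_planeEmbedding {x t u : E} (ht : ‖t‖ = 1) (hu : ‖u‖ = 1)
    (hut : ⟪u, t⟫ = 0) : Function.LeftInverse (planeCoords x t u) (planeEmbedding x t u) := by
  have htu : ⟪t, u⟫ = 0 := by rwa [real_inner_comm]
  intro p
  ext i
  fin_cases i <;>
    simp [planeCoords, planeEmbedding, add_assoc, inner_add_left, inner_smul_left, hut, htu, ht, hu]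

end Plane

theorem sectional_le_tangential_upper_radius_general {n : ℕ}
    (K : Set (EuclideanSpace ℝ (Fin n)))
    (hKc : IsCompact K)
    (x u t : EuclideanSpace ℝ (Fin n)) (hu : ‖u‖ = 1) (ht : ‖t‖ = 1) (hut : ⟪u, t⟫ = 0)
    (hsup : ∀ z ∈ K, ⟪z, u⟫ ≤ ⟪x, u⟫)
    (K' : Set (EuclideanSpace ℝ (Fin 2)))
    (hK'c : IsCompact K')
    (hK'sup : ∀ p ∈ K', p 1 ≤ 0)
    (hsec : ((fun p : EuclideanSpace ℝ (Fin 2) => x + p 0 • t + p 1 • u) ⁻¹' K) ⊆ K') :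
    uppRad ((fun p : EuclideanSpace ℝ (Fin 2) => x + p 0 • t + p 1 • u) ⁻¹' K) ≤
        uppRad K' ∧
      uppRad ((fun p : EuclideanSpace ℝ (Fin 2) => x + p 0 • t + p 1 • u) ⁻¹' K) ≤
        uppRad ((fun z => (EuclideanSpace.equiv (Fin 2) ℝ).symm
          ![⟪z - x, t⟫, ⟪z - x, u⟫]) '' K) := by
  refine ⟨uppRad_mono hK'c.isClosed hK'sup hsec, uppRad_mono ?_ ?_ ?_⟩
  · exact (hKc.image (continuous_planeCoords x t u)).isClosed
  · rintro _ ⟨z, hz, rfl⟩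
    simpa [inner_sub_left] using hsup z hz
  · exact Set.preimage_subset_image_of_inverse (leftInverse_planeCoords_planeEmbedding ht hu hut) K

theorem sectional_le_tangential_upper_radius {n : ℕ}
    (K : Set (EuclideanSpace ℝ (Fin n)))
    (hKc : IsCompact K) (hKconv : Convex ℝ K)
    (x u t : EuclideanSpace ℝ (Fin n)) (hu : ‖u‖ = 1) (ht : ‖t‖ = 1) (hut : ⟪u, t⟫ = 0)
    (hxK : x ∈ K) (hsup : ∀ z ∈ K, ⟪z, u⟫ ≤ ⟪x, u⟫)
    (K' : Set (EuclideanSpace ℝ (Fin 2)))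
    (hK'c : IsCompact K') (hK'conv : Convex ℝ K')
    (hK'0 : (0 : EuclideanSpace ℝ (Fin 2)) ∈ K')
    (hK'sup : ∀ p ∈ K', p 1 ≤ 0)
    (hsec : ((fun p : EuclideanSpace ℝ (Fin 2) => x + p 0 • t + p 1 • u) ⁻¹' K) ⊆ K') :
    uppRad ((fun p : EuclideanSpace ℝ (Fin 2) => x + p 0 • t + p 1 • u) ⁻¹' K) ≤
        uppRad K' ∧
      uppRad ((fun p : EuclideanSpace ℝ (Fin 2) => x + p 0 • t + p 1 • u) ⁻¹' K) ≤
        uppRad ((fun z => (EuclideanSpace.equiv (Fin 2) ℝ).symm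
          ![⟪z - x, t⟫, ⟪z - x, u⟫]) '' K) :=
  sectional_le_tangential_upper_radius_general K hKc x u t hu ht hut hsup K' hK'c hK'sup hsec
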